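/- Let (Z1, Z2) be jointly Gaussian with zero means, variances σ1², σ2² > 0, and correlation ρ ∈ (-1,1). Writing r = σ1/σ2, we have P(|Z1| ≥ |Z2|) = (1/π)·[arctan((r - ρ)/√(1-ρ²)) + arctan((r + ρ)/√(1-ρ²))]. -/

import Mathlib

/-!
Slicing the cone `{|v| ≤ |u|}` along the lines `v = u t`, `t ∈ [-1, 1]`, writes the probability
as `∫_{-1}^{1} ∫ |u| f(u, u t) du dt`. On each line the density is `C exp (-A(t) u²)`, whose first
absolute moment is `C / A(t)`. Completing the square, `A(t)` is proportional to
`(t - ρ/r)² + (1 - ρ²)/r²`, and integrating its reciprocal over `[-1, 1]` gives the two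
arctangents.
-/

open MeasureTheory Real

/-- Joint density of a centered bivariate Gaussian with standard deviations
`σ₁, σ₂` and correlation `ρ`. -/
noncomputable def gaussPDF2 (σ₁ σ₂ ρ u v : ℝ) : ℝ :=
  (1 / (2 * Real.pi * σ₁ * σ₂ * Real.sqrt (1 - ρ ^ 2))) *
    Real.exp (-(u ^ 2 / σ₁ ^ 2 - 2 * ρ * u * v / (σ₁ * σ₂) + v ^ 2 / σ₂ ^ 2) /
      (2 * (1 - ρ ^ 2)))

open Set

theorem integral_Ioi_mul_exp_neg_mul_sq {b : ℝ} (hb : 0 < b) :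
    ∫ x in Ioi (0 : ℝ), x * exp (-b * x ^ 2) = (2 * b)⁻¹ := by
  exact_mod_cast integral_mul_cexp_neg_mul_sq (b := (b : ℂ)) (by simpa using hb)

theorem integral_abs_mul_exp_neg_mul_sq {b : ℝ} (hb : 0 < b) :
    ∫ x, |x| * exp (-b * x ^ 2) = b⁻¹ := by
  have h := integral_comp_abs (f := fun x => x * exp (-b * x ^ 2))
  simp only [sq_abs] at h
  rw [h, integral_Ioi_mul_exp_neg_mul_sq hb]
  field_simp

theorem integral_inv_sub_sq_add_sq (x y a : ℝ) {b : ℝ} (hb : b ≠ 0) :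
    ∫ t in x..y, ((t - a) ^ 2 + b ^ 2)⁻¹ =
      (arctan ((y - a) / b) - arctan ((x - a) / b)) / b := by
  have hderiv (t : ℝ) :
      HasDerivAt (fun t => arctan ((t - a) / b) / b) ((t - a) ^ 2 + b ^ 2)⁻¹ t := by
    have hlin : HasDerivAt (fun t => (t - a) / b) b⁻¹ t := by
      simpa using ((hasDerivAt_id t).sub_const a).div_const b
    refine (hlin.arctan.div_const b).congr_deriv ?_
    have : (t - a) ^ 2 + b ^ 2 ≠ 0 := by positivity
    field_simp
    ring
  rw [intervalIntegral.integral_eq_sub_of_hasDerivAt (fun t _ => hderiv t)]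
  · ring
  · exact (continuous_id.sub continuous_const |>.pow 2 |>.add continuous_const).inv₀
      (fun t => (by positivity : (t - a) ^ 2 + b ^ 2 ≠ 0)) |>.intervalIntegrable _ _

theorem intervalIntegral_neg_abs_abs_eq_abs_smul {E : Type*} [NormedAddCommGroup E]
    [NormedSpace ℝ E] (g : ℝ → E) (c : ℝ) :
    ∫ v in -|c|..|c|, g v = |c| • ∫ t in (-1)..1, g (c * t) := by
  rcases abs_choice c with h | h
  · rw [h, intervalIntegral.smul_integral_comp_mul_left]; simp
  · rw [h, neg_smul, intervalIntegral.smul_integral_comp_mul_left, neg_neg,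
      intervalIntegral.integral_symm]; simp

theorem setIntegral_abs_snd_le_abs_fst {E : Type*} [NormedAddCommGroup E] [NormedSpace ℝ E]
    {f : ℝ × ℝ → E} (hf : Integrable f) :
    ∫ p in {p : ℝ × ℝ | |p.2| ≤ |p.1|}, f p = ∫ u, |u| • ∫ t in (-1)..1, f (u, u * t) := by
  have hS : MeasurableSet {p : ℝ × ℝ | |p.2| ≤ |p.1|} :=
    measurableSet_le measurable_snd.abs measurable_fst.abs
  have hslice (u : ℝ) : (fun v => {p : ℝ × ℝ | |p.2| ≤ |p.1|}.indicator f (u, v)) =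
      (Icc (-|u|) |u|).indicator (fun v => f (u, v)) := by
    ext v
    simp only [indicator, mem_ofPred_eq, mem_Icc, ← abs_le]
  rw [← integral_indicator hS, Measure.volume_eq_prod,
    integral_prod _ (by rw [← Measure.volume_eq_prod]; exact hf.indicator hS)]
  congr 1 with u
  rw [hslice, integral_indicator measurableSet_Icc, integral_Icc_eq_integral_Ioc,
    ← intervalIntegral.integral_of_le (neg_le_self (abs_nonneg u)),
    intervalIntegral_neg_abs_abs_eq_abs_smul]

theorem integral_abs_mul_intervalIntegral_exp_neg_mul_sq {A : ℝ → ℝ} (hA : Measurable A)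
    {c : ℝ} (hc : 0 < c) (hcA : ∀ t, c ≤ A t) (a b : ℝ) :
    ∫ u, |u| * ∫ t in a..b, exp (-A t * u ^ 2) = ∫ t in a..b, (A t)⁻¹ := by
  simp_rw [← intervalIntegral.integral_const_mul]
  rw [← intervalIntegral_integral_swap]
  · exact intervalIntegral.integral_congr fun t _ =>
      integral_abs_mul_exp_neg_mul_sq (hc.trans_le (hcA t))
  have hdom : Integrable (fun u : ℝ => |u| * exp (-c * u ^ 2)) := by
    simpa only [abs_mul, abs_exp] using (integrable_mul_exp_neg_mul_sq hc).abs
  have : IsFiniteMeasure (volume.restrict (uIoc a b)) :=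
    isFiniteMeasure_restrict.mpr measure_Ioc_lt_top.ne
  refine ((integrable_const (1 : ℝ)).mul_prod hdom).mono' (by fun_prop) (ae_of_all _ ?_)
  rintro ⟨t, u⟩
  simp only [Function.uncurry_apply_pair, one_mul, norm_mul, norm_abs_eq_norm, norm_eq_abs,
    abs_exp]
  gcongr
  nlinarith [hcA t, sq_nonneg u]

theorem one_sub_abs_mul_sq_add_sq_le (ρ x y : ℝ) :
    (1 - |ρ|) * (x ^ 2 + y ^ 2) ≤ x ^ 2 - 2 * ρ * x * y + y ^ 2 := by
  rcases le_or_gt 0 ρ with hρ | hρ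
  · rw [abs_of_nonneg hρ]; nlinarith [mul_nonneg hρ (sq_nonneg (x - y))]
  · rw [abs_of_neg hρ]; nlinarith [mul_nonneg (neg_nonneg.mpr hρ.le) (sq_nonneg (x + y))]

theorem integrable_gaussPDF2 {σ₁ σ₂ ρ : ℝ} (hσ₁ : σ₁ ≠ 0) (hσ₂ : σ₂ ≠ 0) (hρ : |ρ| < 1) :
    Integrable fun p : ℝ × ℝ => gaussPDF2 σ₁ σ₂ ρ p.1 p.2 := by
  have hk : 0 < 2 * (1 - ρ ^ 2) := by nlinarith [(sq_lt_one_iff_abs_lt_one ρ).mpr hρ]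
  have hρ₁ : 0 < 1 - |ρ| := sub_pos.mpr hρ
  have hc₁ : 0 < (1 - |ρ|) / σ₁ ^ 2 / (2 * (1 - ρ ^ 2)) := by positivity
  have hc₂ : 0 < (1 - |ρ|) / σ₂ ^ 2 / (2 * (1 - ρ ^ 2)) := by positivity
  refine (((integrable_exp_neg_mul_sq hc₁).mul_prod (integrable_exp_neg_mul_sq hc₂)).const_mul
    |1 / (2 * π * σ₁ * σ₂ * √(1 - ρ ^ 2))|).mono' (by unfold gaussPDF2; fun_prop)
    (ae_of_all _ fun ⟨u, v⟩ => ?_)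
  simp only [gaussPDF2, norm_mul, norm_eq_abs, abs_exp, ← exp_add]
  gcongr
  calc _ = -((u / σ₁) ^ 2 - 2 * ρ * (u / σ₁) * (v / σ₂) + (v / σ₂) ^ 2) / (2 * (1 - ρ ^ 2)) := by
        ring
    _ ≤ -((1 - |ρ|) * ((u / σ₁) ^ 2 + (v / σ₂) ^ 2)) / (2 * (1 - ρ ^ 2)) := by
        gcongr; exact one_sub_abs_mul_sq_add_sq_le ρ _ _
    _ = _ := by ring

/-- Predominance probability: for a nondegenerate centered bivariate Gaussian
with standard deviations `σ₁, σ₂` and correlation `ρ ∈ (-1,1)`, writing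
`r = σ₁/σ₂`, we have
`P(|Z₁| ≥ |Z₂|) = (1/π)(arctan((r-ρ)/√(1-ρ²)) + arctan((r+ρ)/√(1-ρ²)))`. -/
theorem predominance_probability (σ₁ σ₂ ρ : ℝ) (hσ₁ : 0 < σ₁) (hσ₂ : 0 < σ₂)
    (hρ : ρ ∈ Set.Ioo (-1 : ℝ) 1) :
    ∫ p : ℝ × ℝ in {p : ℝ × ℝ | |p.2| ≤ |p.1|}, gaussPDF2 σ₁ σ₂ ρ p.1 p.2 =
      (1 / Real.pi) *
        (Real.arctan ((σ₁ / σ₂ - ρ) / Real.sqrt (1 - ρ ^ 2)) +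
          Real.arctan ((σ₁ / σ₂ + ρ) / Real.sqrt (1 - ρ ^ 2))) := by
  have hρ' : |ρ| < 1 := abs_lt.mpr hρ
  have h1ρ : 0 < 1 - ρ ^ 2 := sub_pos.mpr ((sq_lt_one_iff_abs_lt_one ρ).mpr hρ')
  have hs2 : √(1 - ρ ^ 2) ^ 2 = 1 - ρ ^ 2 := sq_sqrt h1ρ.le
  have hs : 0 < √(1 - ρ ^ 2) := sqrt_pos.mpr h1ρ
  set s := √(1 - ρ ^ 2)
  set C := 1 / (2 * π * σ₁ * σ₂ * s)
  set a := ρ * σ₂ / σ₁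
  set b := s * σ₂ / σ₁
  set k := 2 * s ^ 2 * σ₂ ^ 2
  have hb : 0 < b := by positivity
  have hray (u t : ℝ) :
      gaussPDF2 σ₁ σ₂ ρ u (u * t) = C * exp (-(((t - a) ^ 2 + b ^ 2) / k) * u ^ 2) := by
    rw [gaussPDF2]
    congr 2
    rw [← hs2]
    simp only [a, b, k]
    field_simp
    linear_combination u ^ 2 * σ₂ ^ 2 * hs2
  calc _ = ∫ u, |u| • ∫ t in (-1)..1, gaussPDF2 σ₁ σ₂ ρ u (u * t) :=
        setIntegral_abs_snd_le_abs_fst (integrable_gaussPDF2 hσ₁.ne' hσ₂.ne' hρ')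
    _ = C * ∫ u, |u| * ∫ t in (-1)..1, exp (-(((t - a) ^ 2 + b ^ 2) / k) * u ^ 2) := by
        simp_rw [hray, smul_eq_mul, intervalIntegral.integral_const_mul, mul_left_comm _ C,
          integral_const_mul]
    _ = C * ∫ t in (-1)..1, (((t - a) ^ 2 + b ^ 2) / k)⁻¹ := by
        rw [integral_abs_mul_intervalIntegral_exp_neg_mul_sq (by fun_prop) (c := b ^ 2 / k)
          (by positivity) (fun t => by gcongr; nlinarith [sq_nonneg (t - a)])]
    _ = C * k * ∫ t in (-1)..1, ((t - a) ^ 2 + b ^ 2)⁻¹ := by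
        simp_rw [inv_div, div_eq_mul_inv, intervalIntegral.integral_const_mul, mul_assoc]
    _ = _ := by
        rw [integral_inv_sub_sq_add_sq _ _ _ hb.ne', sub_eq_add_neg, ← arctan_neg]
        simp only [C, a, b, k]
        field_simp
        ring_nf
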